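/- arXiv:2503.11996 — 5 statements merged into one kernel-verified Lean document; each statement's English description precedes it below -/
import Mathlib

section
/- If G is a finite simple graph with no isolated vertex, then 2·γ_ev(G) = γ_pr(G). -/
open SimpleGraph

variable {V : Type*}

/-- `D` is a dominating set of `G`: every vertex outside `D` has a neighbor in `D`. -/
def IsDomSet (G : SimpleGraph V) (D : Set V) : Prop :=
  ∀ v ∉ D, ∃ u ∈ D, G.Adj u v

/-- The edge `e` ev-dominates the vertex `v`: `e` is incident to `v` or to a neighbor of `v`. -/
def EvDom (G : SimpleGraph V) (e : Sym2 V) (v : V) : Prop :=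
  v ∈ e ∨ ∃ u ∈ e, G.Adj u v

/-- `M` is an edge-vertex dominating set of `G`. -/
def IsEvDomSet (G : SimpleGraph V) (M : Set (Sym2 V)) : Prop :=
  M ⊆ G.edgeSet ∧ ∀ v : V, ∃ e ∈ M, EvDom G e v

/-- `M` is a minimum edge-vertex dominating set of `G`. -/
def IsMinEvDomSet (G : SimpleGraph V) (M : Set (Sym2 V)) : Prop :=
  IsEvDomSet G M ∧ ∀ M' : Set (Sym2 V), IsEvDomSet G M' → M.ncard ≤ M'.ncard

/-- The edge-vertex domination number `γ_ev(G)`. -/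
noncomputable def evNum (G : SimpleGraph V) : ℕ :=
  sInf {n | ∃ M : Set (Sym2 V), IsEvDomSet G M ∧ M.ncard = n}

/-- The set of all endpoints of edges in `M`. -/
def edgeVerts (M : Set (Sym2 V)) : Set V := {v | ∃ e ∈ M, v ∈ e}

/-- `M` is a perfect matching of the induced subgraph `G[D]`: a set of edges of `G`
with all endpoints in `D`, such that every vertex of `D` lies in exactly one edge of `M`. -/
def IsPMOn (G : SimpleGraph V) (D : Set V) (M : Set (Sym2 V)) : Prop :=
  M ⊆ G.edgeSet ∧ (∀ e ∈ M, ∀ v ∈ e, v ∈ D) ∧ ∀ v ∈ D, ∃! e, e ∈ M ∧ v ∈ e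

/-- `D` is a paired-dominating set of `G`. -/
def IsPairedDomSet (G : SimpleGraph V) (D : Set V) : Prop :=
  IsDomSet G D ∧ ∃ M : Set (Sym2 V), IsPMOn G D M

/-- `D` is a minimum paired-dominating set of `G`. -/
def IsMinPairedDomSet (G : SimpleGraph V) (D : Set V) : Prop :=
  IsPairedDomSet G D ∧ ∀ D' : Set V, IsPairedDomSet G D' → D.ncard ≤ D'.ncard

/-- The paired-domination number `γ_pr(G)`. -/
noncomputable def prNum (G : SimpleGraph V) : ℕ :=
  sInf {n | ∃ D : Set V, IsPairedDomSet G D ∧ D.ncard = n}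

/-- No two distinct edges of `M` share a vertex. -/
def NoSharedVertex (M : Set (Sym2 V)) : Prop :=
  ∀ e ∈ M, ∀ f ∈ M, e ≠ f → ∀ v : V, v ∈ e → v ∉ f

/-- `G` has no isolated vertex. -/
def NoIsolated (G : SimpleGraph V) : Prop := ∀ v : V, ∃ u, G.Adj u v

lemma edge_rep (G : SimpleGraph V) {e : Sym2 V} (he : e ∈ G.edgeSet) :
    ∃ a b, G.Adj a b ∧ e = s(a, b) := by
  induction e using Sym2.ind with
  | _ a b => exact ⟨a, b, he, rfl⟩


lemma pm_extend (G : SimpleGraph V) {D : Set V} {Mm : Set (Sym2 V)}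
    (h : IsPMOn G D Mm) {x y : V} (hxy : G.Adj x y) (hx : x ∉ D) (hy : y ∉ D) :
    IsPMOn G (D ∪ {x, y}) (Mm ∪ {s(x, y)}) := by
  obtain ⟨hsub, hend, huniq⟩ := h
  refine ⟨?_, ?_, ?_⟩
  · rintro e (he | he)
    · exact hsub he
    · simp only [Set.mem_singleton_iff] at he; subst he; exact hxy
  · rintro e (he | he) v hv
    · exact Or.inl (hend e he v hv)
    · simp only [Set.mem_singleton_iff] at he; subst he
      rw [Sym2.mem_iff] at hv
      rcases hv with rfl | rfl
      · exact Or.inr (Or.inl rfl)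
      · exact Or.inr (Or.inr rfl)
  · rintro v (hv | hv)
    · obtain ⟨e, ⟨heM, hevv⟩, hu⟩ := huniq v hv
      refine ⟨e, ⟨Or.inl heM, hevv⟩, ?_⟩
      rintro f ⟨hf | hf, hvf⟩
      · exact hu f ⟨hf, hvf⟩
      · simp only [Set.mem_singleton_iff] at hf; subst hf
        rw [Sym2.mem_iff] at hvf
        rcases hvf with rfl | rfl
        · exact absurd hv hx
        · exact absurd hv hy
    · have hv' : v = x ∨ v = y := hv
      have hmem : v ∈ s(x, y) := by rw [Sym2.mem_iff]; exact hv'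
      refine ⟨s(x, y), ⟨Or.inr rfl, hmem⟩, ?_⟩
      rintro f ⟨hf | hf, hvf⟩
      · exfalso
        have := hend f hf v hvf
        rcases hv' with rfl | rfl
        · exact hx this
        · exact hy this
      · exact hf


lemma pair_ncard_le (x y : V) : ({x, y} : Set V).ncard ≤ 2 := by
  apply le_trans (Set.ncard_insert_le x {y})
  simp [Set.ncard_singleton]


lemma build [Fintype V] (G : SimpleGraph V) (hG : NoIsolated G)
    (S : Finset (Sym2 V)) (hS : ∀ e ∈ S, e ∈ G.edgeSet) :
    ∃ D : Set V, ∃ Mm : Set (Sym2 V), IsPMOn G D Mm ∧ D.ncard ≤ 2 * S.card ∧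
      ∀ e ∈ S, ∀ v : V, EvDom G e v → v ∈ D ∨ ∃ u ∈ D, G.Adj u v := by
  classical
  induction S using Finset.induction with
  | empty =>
    refine ⟨∅, ∅, ⟨by simp, by simp, by simp⟩, by simp, by simp⟩
  | @insert e S henot ih =>
    obtain ⟨D, Mm, hpm, hcard, hdom⟩ := ih fun f hf => hS f (Finset.mem_insert_of_mem hf)
    obtain ⟨a, b, hab, rfl⟩ := edge_rep G (hS _ (Finset.mem_insert_self _ _))
    have hcards : (insert s(a,b) S).card = S.card + 1 := Finset.card_insert_of_notMem henot
    have hDfin : D.Finite := Set.toFinite _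
    -- helper to finish with an extended pair
    have ext_case : ∀ x y : V, G.Adj x y → x ∉ D → y ∉ D →
        (∀ v : V, EvDom G s(a,b) v → v ∈ D ∪ {x, y} ∨ ∃ u ∈ D ∪ {x, y}, G.Adj u v) →
        ∃ D' : Set V, ∃ Mm' : Set (Sym2 V), IsPMOn G D' Mm' ∧
          D'.ncard ≤ 2 * (insert s(a,b) S).card ∧
          ∀ f ∈ insert s(a,b) S, ∀ v : V, EvDom G f v →
            v ∈ D' ∨ ∃ u ∈ D', G.Adj u v := by
      intro x y hxy hx hy hcov
      refine ⟨D ∪ {x, y}, Mm ∪ {s(x, y)}, pm_extend G hpm hxy hx hy, ?_, ?_⟩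
      · calc (D ∪ {x, y}).ncard ≤ D.ncard + ({x, y} : Set V).ncard :=
              Set.ncard_union_le _ _
          _ ≤ 2 * S.card + 2 := by
              have := pair_ncard_le x y; omega
          _ = 2 * (insert s(a,b) S).card := by rw [hcards]; ring
      · intro f hf v hv
        rcases Finset.mem_insert.mp hf with rfl | hf
        · exact hcov v hv
        · rcases hdom f hf v hv with h | ⟨u, hu, huv⟩
          · exact Or.inl (Or.inl h)
          · exact Or.inr ⟨u, Or.inl hu, huv⟩
    -- helper to finish without extending
    have same_case :
        (∀ v : V, EvDom G s(a,b) v → v ∈ D ∨ ∃ u ∈ D, G.Adj u v) →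
        ∃ D' : Set V, ∃ Mm' : Set (Sym2 V), IsPMOn G D' Mm' ∧
          D'.ncard ≤ 2 * (insert s(a,b) S).card ∧
          ∀ f ∈ insert s(a,b) S, ∀ v : V, EvDom G f v →
            v ∈ D' ∨ ∃ u ∈ D', G.Adj u v := by
      intro hcov
      refine ⟨D, Mm, hpm, by rw [hcards]; omega, ?_⟩
      intro f hf v hv
      rcases Finset.mem_insert.mp hf with rfl | hf
      · exact hcov v hv
      · exact hdom f hf v hv
    have evcases : ∀ v : V, EvDom G s(a,b) v →
        v = a ∨ v = b ∨ G.Adj a v ∨ G.Adj b v := by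
      intro v hv
      rcases hv with hv | ⟨u, hu, huv⟩
      · rw [Sym2.mem_iff] at hv; tauto
      · rw [Sym2.mem_iff] at hu
        rcases hu with rfl | rfl <;> tauto
    by_cases ha : a ∈ D <;> by_cases hb : b ∈ D
    · apply same_case
      intro v hv
      rcases evcases v hv with rfl | rfl | h | h
      · exact Or.inl ha
      · exact Or.inl hb
      · exact Or.inr ⟨a, ha, h⟩
      · exact Or.inr ⟨b, hb, h⟩
    · by_cases hc : ∃ c, G.Adj c b ∧ c ∉ D
      · obtain ⟨c, hcb, hcD⟩ := hc
        apply ext_case b c hcb.symm hb hcD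
        intro v hv
        rcases evcases v hv with rfl | rfl | h | h
        · exact Or.inl (Or.inl ha)
        · exact Or.inl (Or.inr (Or.inl rfl))
        · exact Or.inr ⟨a, Or.inl ha, h⟩
        · exact Or.inr ⟨b, Or.inr (Or.inl rfl), h⟩
      · push_neg at hc
        apply same_case
        intro v hv
        rcases evcases v hv with rfl | rfl | h | h
        · exact Or.inl ha
        · exact Or.inr ⟨a, ha, hab⟩
        · exact Or.inr ⟨a, ha, h⟩
        · exact Or.inl (hc v h.symm)
    · by_cases hc : ∃ c, G.Adj c a ∧ c ∉ D
      · obtain ⟨c, hca, hcD⟩ := hc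
        apply ext_case a c hca.symm ha hcD
        intro v hv
        rcases evcases v hv with rfl | rfl | h | h
        · exact Or.inl (Or.inr (Or.inl rfl))
        · exact Or.inl (Or.inl hb)
        · exact Or.inr ⟨a, Or.inr (Or.inl rfl), h⟩
        · exact Or.inr ⟨b, Or.inl hb, h⟩
      · push_neg at hc
        apply same_case
        intro v hv
        rcases evcases v hv with rfl | rfl | h | h
        · exact Or.inr ⟨b, hb, hab.symm⟩
        · exact Or.inl hb
        · exact Or.inl (hc v h.symm)
        · exact Or.inr ⟨b, hb, h⟩
    · apply ext_case a b hab ha hb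
      intro v hv
      rcases evcases v hv with rfl | rfl | h | h
      · exact Or.inl (Or.inr (Or.inl rfl))
      · exact Or.inl (Or.inr (Or.inr rfl))
      · exact Or.inr ⟨a, Or.inr (Or.inl rfl), h⟩
      · exact Or.inr ⟨b, Or.inr (Or.inr rfl), h⟩


lemma pm_card [Fintype V] {G : SimpleGraph V} :
    ∀ n : ℕ, ∀ D : Set V, ∀ Mm : Set (Sym2 V), Mm.ncard = n →
      IsPMOn G D Mm → D.ncard = 2 * Mm.ncard := by
  intro n
  induction n with
  | zero =>
    intro D Mm hn ⟨hsub, hend, huniq⟩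
    have hMfin : Mm.Finite := Set.toFinite _
    have hM : Mm = ∅ := (Set.ncard_eq_zero hMfin).mp hn
    subst hM
    have hD : D = ∅ := by
      ext v; simp only [Set.mem_empty_iff_false, iff_false]
      intro hv
      obtain ⟨e, ⟨he, _⟩, _⟩ := huniq v hv
      exact he
    simp [hD, hn]
  | succ n ih =>
    intro D Mm hn hpm
    obtain ⟨hsub, hend, huniq⟩ := hpm
    have hMfin : Mm.Finite := Set.toFinite _
    have hne : Mm.Nonempty := by
      rw [← Set.ncard_pos hMfin] at *; omega
    obtain ⟨e, he⟩ := hne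
    obtain ⟨a, b, hab, rfl⟩ := edge_rep G (hsub he)
    have hane : a ≠ b := hab.ne
    have haD : a ∈ D := hend _ he a (Sym2.mem_mk_left a b)
    have hbD : b ∈ D := hend _ he b (Sym2.mem_mk_right a b)
    have hpm' : IsPMOn G (D \ {a, b}) (Mm \ {s(a, b)}) := by
      refine ⟨fun f hf => hsub hf.1, ?_, ?_⟩
      · rintro f ⟨hf, hfne⟩ v hv
        refine ⟨hend f hf v hv, ?_⟩
        simp only [Set.mem_insert_iff, Set.mem_singleton_iff] at hfne ⊢
        rintro (h1 | h1)
        · obtain ⟨g, _, hu⟩ := huniq v (hend f hf v hv)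
          have ha1 := hu f ⟨hf, hv⟩
          have ha2 := hu s(a, b) ⟨he, by rw [h1]; exact Sym2.mem_mk_left a b⟩
          exact hfne (ha1.trans ha2.symm)
        · obtain ⟨g, _, hu⟩ := huniq v (hend f hf v hv)
          have ha1 := hu f ⟨hf, hv⟩
          have ha2 := hu s(a, b) ⟨he, by rw [h1]; exact Sym2.mem_mk_right a b⟩
          exact hfne (ha1.trans ha2.symm)
      · rintro v ⟨hv, hvne⟩
        obtain ⟨f, ⟨hfM, hvf⟩, hu⟩ := huniq v hv
        have hfne : f ≠ s(a, b) := by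
          rintro rfl
          rw [Sym2.mem_iff] at hvf
          simp only [Set.mem_insert_iff, Set.mem_singleton_iff] at hvne
          tauto
        refine ⟨f, ⟨⟨hfM, hfne⟩, hvf⟩, ?_⟩
        rintro g ⟨⟨hgM, _⟩, hvg⟩
        exact hu g ⟨hgM, hvg⟩
    have hMn : (Mm \ {s(a, b)}).ncard = n := by
      have := Set.ncard_diff_singleton_add_one he hMfin
      omega
    have hih := ih (D \ {a, b}) (Mm \ {s(a, b)}) hMn hpm'
    have hsubD : ({a, b} : Set V) ⊆ D := by
      rintro v (rfl | rfl)
      · exact haD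
      · exact hbD
    have hDeq : D \ {a, b} ∪ {a, b} = D := Set.diff_union_of_subset hsubD
    have hdisj : Disjoint (D \ {a, b}) ({a, b} : Set V) := Set.disjoint_sdiff_left
    have hDcard : D.ncard = (D \ {a, b}).ncard + 2 := by
      have h1 : (D \ {a, b} ∪ {a, b}).ncard = (D \ {a, b}).ncard + ({a, b} : Set V).ncard :=
        Set.ncard_union_eq hdisj (Set.toFinite _) (Set.toFinite _)
      rw [hDeq, Set.ncard_pair hane] at h1
      exact h1
    rw [hDcard, hih, hMn, hn]
    ring

theorem stmt0 [Fintype V] (G : SimpleGraph V) (hG : NoIsolated G) :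
    2 * evNum G = prNum G := by
  classical
  unfold evNum prNum
  have hev0 : IsEvDomSet G G.edgeSet := by
    refine ⟨le_refl _, fun v => ?_⟩
    obtain ⟨u, hu⟩ := hG v
    exact ⟨s(u, v), hu, Or.inl (Sym2.mem_mk_right u v)⟩
  have hne : {n | ∃ M : Set (Sym2 V), IsEvDomSet G M ∧ M.ncard = n}.Nonempty :=
    ⟨_, G.edgeSet, hev0, rfl⟩
  obtain ⟨Mmin, hMmin, hMcard⟩ := Nat.sInf_mem hne
  have hMfin : Mmin.Finite := Set.toFinite _
  obtain ⟨D, Mm, hpm, hcard, hdom⟩ := build G hG hMfin.toFinset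
    (fun e he => hMmin.1 (hMfin.mem_toFinset.mp he))
  have hDpd : IsPairedDomSet G D := by
    refine ⟨fun v hv => ?_, ⟨Mm, hpm⟩⟩
    obtain ⟨e, he, hev⟩ := hMmin.2 v
    rcases hdom e (hMfin.mem_toFinset.mpr he) v hev with h | h
    · exact absurd h hv
    · exact h
  have h1 : sInf {n | ∃ D : Set V, IsPairedDomSet G D ∧ D.ncard = n} ≤
      2 * sInf {n | ∃ M : Set (Sym2 V), IsEvDomSet G M ∧ M.ncard = n} := by
    refine le_trans (Nat.sInf_le ⟨D, hDpd, rfl⟩) ?_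
    rw [← hMcard, Set.ncard_eq_toFinset_card Mmin hMfin]
    exact hcard
  have hprne : {n | ∃ D : Set V, IsPairedDomSet G D ∧ D.ncard = n}.Nonempty :=
    ⟨_, D, hDpd, rfl⟩
  obtain ⟨Dmin, hDmin, hDcard⟩ := Nat.sInf_mem hprne
  obtain ⟨hdomset, M', hM'⟩ := hDmin
  have hev' : IsEvDomSet G M' := by
    refine ⟨hM'.1, fun v => ?_⟩
    by_cases hv : v ∈ Dmin
    · obtain ⟨e, ⟨heM, hve⟩, _⟩ := hM'.2.2 v hv
      exact ⟨e, heM, Or.inl hve⟩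
    · obtain ⟨u, hu, huv⟩ := hdomset v hv
      obtain ⟨e, ⟨heM, hue⟩, _⟩ := hM'.2.2 u hu
      exact ⟨e, heM, Or.inr ⟨u, hue, huv⟩⟩
  have h2 : 2 * sInf {n | ∃ M : Set (Sym2 V), IsEvDomSet G M ∧ M.ncard = n} ≤
      sInf {n | ∃ D : Set V, IsPairedDomSet G D ∧ D.ncard = n} := by
    have hle : sInf {n | ∃ M : Set (Sym2 V), IsEvDomSet G M ∧ M.ncard = n} ≤ M'.ncard :=
      Nat.sInf_le ⟨M', hev', rfl⟩
    have hc : Dmin.ncard = 2 * M'.ncard := pm_card M'.ncard Dmin M' rfl hM'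
    omega
  omega
end

section
/- Let M be a minimum ev-dominating set (γ_ev-set) of a finite simple graph G. If there exist two distinct edges in M sharing a vertex, then there exist two γ_ev-sets M′ and M″ of G such that V_G(M′) ≠ V_G(M″), no two distinct edges of M′ share a vertex, and no two distinct edges of M″ share a vertex. -/
open SimpleGraph

variable {V : Type*}

section EvHelpers

variable [Fintype V] {G : SimpleGraph V}

private lemma redundHelper {M : Set (Sym2 V)} (hM : IsMinEvDomSet G M) {f : Sym2 V} (hf : f ∈ M)
    (hcov : ∀ z : V, EvDom G f z → ∃ g ∈ M \ {f}, EvDom G g z) : False := by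
  have hdom : IsEvDomSet G (M \ {f}) := by
    refine ⟨Set.diff_subset.trans hM.1.1, fun z => ?_⟩
    obtain ⟨g, hg, hgz⟩ := hM.1.2 z
    by_cases h : g = f
    · exact hcov z (h ▸ hgz)
    · exact ⟨g, ⟨hg, h⟩, hgz⟩
  have h1 := hM.2 _ hdom
  have h2 : (M \ {f}).ncard + 1 = M.ncard :=
    Set.ncard_diff_singleton_add_one hf (Set.toFinite M)
  omega

private lemma freshHelper {M : Set (Sym2 V)} (hM : IsMinEvDomSet G M) {e f : Sym2 V} {u v w : V}
    (he : e ∈ M) (hf : f ∈ M) (hef : e ≠ f) (heq : e = s(v, u)) (hfq : f = s(v, w))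
    (hvw : G.Adj v w) :
    ∃ x, G.Adj w x ∧ x ≠ v ∧ x ∉ edgeVerts (M \ {f}) := by
  by_contra hcon
  push_neg at hcon
  refine redundHelper hM hf fun z hz => ?_
  have heM : e ∈ M \ {f} := ⟨he, hef⟩
  have hve : v ∈ e := heq ▸ Sym2.mem_mk_left v u
  rcases hz with hz | ⟨c, hc, hcz⟩
  · rw [hfq, Sym2.mem_iff] at hz
    rcases hz with hz | hz
    · exact ⟨e, heM, Or.inl (by rw [hz]; exact hve)⟩
    · exact ⟨e, heM, Or.inr ⟨v, hve, by rw [hz]; exact hvw⟩⟩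
  · rw [hfq, Sym2.mem_iff] at hc
    rcases hc with hc | hc
    · exact ⟨e, heM, Or.inr ⟨v, hve, by rw [← hc]; exact hcz⟩⟩
    · subst hc
      by_cases hzv : z = v
      · exact ⟨e, heM, Or.inl (by rw [hzv]; exact hve)⟩
      · obtain ⟨g, hg, hzg⟩ := hcon z hcz hzv
        exact ⟨g, hg, Or.inl hzg⟩

private lemma uniqueHelper {M : Set (Sym2 V)} (hM : IsMinEvDomSet G M) {e f : Sym2 V}
    {u v w x : V}
    (he : e ∈ M) (hf : f ∈ M) (hef : e ≠ f) (heq : e = s(v, u)) (hfq : f = s(v, w))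
    (hvw : G.Adj v w) (hux : G.Adj u x)
    (hA : ∀ z, G.Adj w z → z ≠ v → z ∉ edgeVerts (M \ {f}) → z = x) : False := by
  refine redundHelper hM hf fun z hz => ?_
  have heM : e ∈ M \ {f} := ⟨he, hef⟩
  have hve : v ∈ e := heq ▸ Sym2.mem_mk_left v u
  have hue : u ∈ e := heq ▸ Sym2.mem_mk_right v u
  rcases hz with hz | ⟨c, hc, hcz⟩
  · rw [hfq, Sym2.mem_iff] at hz
    rcases hz with hz | hz
    · exact ⟨e, heM, Or.inl (by rw [hz]; exact hve)⟩
    · exact ⟨e, heM, Or.inr ⟨v, hve, by rw [hz]; exact hvw⟩⟩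
  · rw [hfq, Sym2.mem_iff] at hc
    rcases hc with hc | hc
    · exact ⟨e, heM, Or.inr ⟨v, hve, by rw [← hc]; exact hcz⟩⟩
    · subst hc
      by_cases hzv : z = v
      · exact ⟨e, heM, Or.inl (by rw [hzv]; exact hve)⟩
      by_cases hzev : z ∈ edgeVerts (M \ {f})
      · obtain ⟨g, hg, hzg⟩ := hzev
        exact ⟨g, hg, Or.inl hzg⟩
      · have hzx := hA z hcz hzv hzev
        exact ⟨e, heM, Or.inr ⟨u, hue, by rw [hzx]; exact hux⟩⟩

private lemma swapHelper {M : Set (Sym2 V)} (hM : IsMinEvDomSet G M) {e f : Sym2 V} {u v w x : V}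
    (he : e ∈ M) (hf : f ∈ M) (hef : e ≠ f) (heq : e = s(v, u)) (hfq : f = s(v, w))
    (hvw : G.Adj v w) (hwx : G.Adj w x) (hxv : x ≠ v) (hxA : x ∉ edgeVerts (M \ {f})) :
    IsMinEvDomSet G (insert s(w, x) (M \ {f})) ∧
      edgeVerts M ⊆ edgeVerts (insert s(w, x) (M \ {f})) ∧
      x ∈ edgeVerts (insert s(w, x) (M \ {f})) ∧ x ∉ edgeVerts M := by
  have heM : e ∈ M \ {f} := ⟨he, hef⟩
  have hve : v ∈ e := heq ▸ Sym2.mem_mk_left v u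
  have hnm : s(w, x) ∉ M \ {f} := fun h => hxA ⟨_, h, Sym2.mem_mk_right w x⟩
  have hcard : (insert s(w, x) (M \ {f})).ncard = M.ncard := by
    rw [Set.ncard_insert_of_notMem hnm (Set.toFinite _)]
    exact Set.ncard_diff_singleton_add_one hf (Set.toFinite M)
  have hdom : IsEvDomSet G (insert s(w, x) (M \ {f})) := by
    constructor
    · exact Set.insert_subset hwx (Set.diff_subset.trans hM.1.1)
    · intro z
      obtain ⟨g, hg, hgz⟩ := hM.1.2 z
      by_cases hgf : g = f
      · subst hgf
        rcases hgz with hz | ⟨c, hc, hcz⟩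
        · rw [hfq, Sym2.mem_iff] at hz
          rcases hz with hz | hz
          · exact ⟨e, Set.mem_insert_of_mem _ heM, Or.inl (by rw [hz]; exact hve)⟩
          · exact ⟨s(w, x), Set.mem_insert _ _, Or.inl (by rw [hz]; exact Sym2.mem_mk_left w x)⟩
        · rw [hfq, Sym2.mem_iff] at hc
          rcases hc with hc | hc
          · exact ⟨e, Set.mem_insert_of_mem _ heM, Or.inr ⟨v, hve, by rw [← hc]; exact hcz⟩⟩
          · exact ⟨s(w, x), Set.mem_insert _ _,
              Or.inr ⟨w, Sym2.mem_mk_left w x, by rw [← hc]; exact hcz⟩⟩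
      · exact ⟨g, Set.mem_insert_of_mem _ ⟨hg, hgf⟩, hgz⟩
  have hxM : x ∉ edgeVerts M := by
    rintro ⟨g, hg, hxg⟩
    by_cases hgf : g = f
    · subst hgf
      rw [hfq, Sym2.mem_iff] at hxg
      rcases hxg with h' | h'
      · exact hxv h'
      · exact hwx.ne' h'
    · exact hxA ⟨g, ⟨hg, hgf⟩, hxg⟩
  refine ⟨⟨hdom, fun M' hM' => by rw [hcard]; exact hM.2 M' hM'⟩, ?_,
    ⟨s(w, x), Set.mem_insert _ _, Sym2.mem_mk_right w x⟩, hxM⟩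
  rintro z ⟨g, hg, hzg⟩
  by_cases hgf : g = f
  · subst hgf
    rw [hfq, Sym2.mem_iff] at hzg
    rcases hzg with h' | h'
    · exact ⟨e, Set.mem_insert_of_mem _ heM, by rw [h']; exact hve⟩
    · exact ⟨s(w, x), Set.mem_insert _ _, by rw [h']; exact Sym2.mem_mk_left w x⟩
  · exact ⟨g, Set.mem_insert_of_mem _ ⟨hg, hgf⟩, hzg⟩

private lemma matchHelper {M : Set (Sym2 V)} {f : Sym2 V} {w x : V}
    (hns : NoSharedVertex (M \ {f})) (hw : ∀ g ∈ M \ {f}, w ∉ g)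
    (hxA : x ∉ edgeVerts (M \ {f})) (hwx : w ≠ x) :
    NoSharedVertex (insert s(w, x) (M \ {f})) := by
  intro g hg h hh hgh z hzg hzh
  rcases Set.mem_insert_iff.mp hg with rfl | hg
  · rcases Set.mem_insert_iff.mp hh with rfl | hh
    · exact hgh rfl
    · rw [Sym2.mem_iff] at hzg
      rcases hzg with hz | hz
      · exact hw h hh (by rw [← hz]; exact hzh)
      · exact hxA ⟨h, hh, by rw [← hz]; exact hzh⟩
  · rcases Set.mem_insert_iff.mp hh with rfl | hh
    · rw [Sym2.mem_iff] at hzh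
      rcases hzh with hz | hz
      · exact hw g hg (by rw [← hz]; exact hzg)
      · exact hxA ⟨g, hg, by rw [← hz]; exact hzg⟩
    · exact hns g hg h hh hgh z hzg hzh

private lemma sharedHelper {M : Set (Sym2 V)} {f : Sym2 V} {w x : V}
    (hterm : ¬(NoSharedVertex (M \ {f}) ∧ ∀ g ∈ M \ {f}, w ∉ g))
    (hxA : x ∉ edgeVerts (M \ {f})) :
    ∃ a ∈ insert s(w, x) (M \ {f}), ∃ b ∈ insert s(w, x) (M \ {f}),
      a ≠ b ∧ ∃ z : V, z ∈ a ∧ z ∈ b := by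
  by_cases hns : NoSharedVertex (M \ {f})
  · have hg : ∃ g ∈ M \ {f}, w ∈ g := by
      by_contra hc
      push_neg at hc
      exact hterm ⟨hns, hc⟩
    obtain ⟨g, hg, hwg⟩ := hg
    refine ⟨s(w, x), Set.mem_insert _ _, g, Set.mem_insert_of_mem _ hg, ?_,
      w, Sym2.mem_mk_left w x, hwg⟩
    rintro rfl
    exact hxA ⟨_, hg, Sym2.mem_mk_right w x⟩
  · unfold NoSharedVertex at hns
    push_neg at hns
    obtain ⟨a, ha, b, hb, hab, z, hza, hzb⟩ := hns
    exact ⟨a, Set.mem_insert_of_mem _ ha, b, Set.mem_insert_of_mem _ hb, hab, z, hza, hzb⟩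

private lemma mainHelper (G : SimpleGraph V) [Fintype V] : ∀ (n : ℕ) (M : Set (Sym2 V)),
    IsMinEvDomSet G M → (∃ e ∈ M, ∃ f ∈ M, e ≠ f ∧ ∃ v : V, v ∈ e ∧ v ∈ f) →
    Fintype.card V - (edgeVerts M).ncard < n →
    ∃ M' M'' : Set (Sym2 V), IsMinEvDomSet G M' ∧ IsMinEvDomSet G M'' ∧
      edgeVerts M' ≠ edgeVerts M'' ∧ NoSharedVertex M' ∧ NoSharedVertex M'' := by
  intro n
  induction n with
  | zero => intro M _ _ h; omega
  | succ n ih =>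
    intro M hM hsh hlt
    obtain ⟨e, he, f, hf, hef, v, hve, hvf⟩ := hsh
    obtain ⟨u, heq⟩ := Sym2.mem_iff_exists.mp hve
    obtain ⟨w, hfq⟩ := Sym2.mem_iff_exists.mp hvf
    have hvu : G.Adj v u := G.mem_edgeSet.mp (by rw [← heq]; exact hM.1.1 he)
    have hvw : G.Adj v w := G.mem_edgeSet.mp (by rw [← hfq]; exact hM.1.1 hf)
    have hveE : v ∈ e := heq ▸ Sym2.mem_mk_left v u
    have hueE : u ∈ e := heq ▸ Sym2.mem_mk_right v u
    have huw : u ≠ w := by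
      rintro rfl
      exact hef (by rw [heq, hfq])
    by_cases hterm : NoSharedVertex (M \ {f}) ∧ ∀ g ∈ M \ {f}, w ∉ g
    · obtain ⟨x, hwx, hxv, hxA⟩ := freshHelper hM he hf hef heq hfq hvw
      obtain ⟨y, huy, hyv, hyB⟩ := freshHelper hM hf he hef.symm hfq heq hvu
      by_cases hxy : ∃ x', (G.Adj w x' ∧ x' ≠ v ∧ x' ∉ edgeVerts (M \ {f})) ∧
          ∃ y', (G.Adj u y' ∧ y' ≠ v ∧ y' ∉ edgeVerts (M \ {e})) ∧ x' ≠ y'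
      · obtain ⟨x', ⟨hwx', hx'v, hx'A⟩, y', ⟨huy', hy'v, hy'B⟩, hx'y'⟩ := hxy
        obtain ⟨hM1, -, -, -⟩ := swapHelper hM he hf hef heq hfq hvw hwx' hx'v hx'A
        obtain ⟨hM2, -, -, -⟩ := swapHelper hM hf he hef.symm hfq heq hvu huy' hy'v hy'B
        have hnsE : NoSharedVertex (M \ {e}) := by
          intro g hg h hh hgh z hzg hzh
          have hgne : g ≠ e := fun h' => hg.2 h'
          have hhne : h ≠ e := fun h' => hh.2 h'
          by_cases hgf : g = f
          · have hhf : h ≠ f := fun hh' => hgh (hgf.trans hh'.symm)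
            subst hgf
            rw [hfq, Sym2.mem_iff] at hzg
            rcases hzg with rfl | rfl
            · exact hterm.1 e ⟨he, hef⟩ h ⟨hh.1, hhf⟩ (Ne.symm hhne) z hveE hzh
            · exact hterm.2 h ⟨hh.1, hhf⟩ hzh
          · by_cases hhf : h = f
            · subst hhf
              rw [hfq, Sym2.mem_iff] at hzh
              rcases hzh with rfl | rfl
              · exact hterm.1 e ⟨he, hef⟩ g ⟨hg.1, hgf⟩ (Ne.symm hgne) z hveE hzg
              · exact hterm.2 g ⟨hg.1, hgf⟩ hzg
            · exact hterm.1 g ⟨hg.1, hgf⟩ h ⟨hh.1, hhf⟩ hgh z hzg hzh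
        have huE : ∀ g ∈ M \ {e}, u ∉ g := by
          intro g hg hug
          by_cases hgf : g = f
          · subst hgf
            rw [hfq, Sym2.mem_iff] at hug
            rcases hug with h' | h'
            · exact hvu.ne' h'
            · exact huw h'
          · exact hterm.1 g ⟨hg.1, hgf⟩ e ⟨he, hef⟩ (fun h' => hg.2 h') u hug hueE
        have hm1 := matchHelper hterm.1 hterm.2 hx'A hwx'.ne
        have hm2 := matchHelper hnsE huE hy'B huy'.ne
        have hx1 : x' ∈ edgeVerts (insert s(w, x') (M \ {f})) :=
          ⟨s(w, x'), Set.mem_insert _ _, Sym2.mem_mk_right w x'⟩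
        have hx2 : x' ∉ edgeVerts (insert s(u, y') (M \ {e})) := by
          rintro ⟨g, hg, hxg⟩
          rcases Set.mem_insert_iff.mp hg with rfl | hg
          · rw [Sym2.mem_iff] at hxg
            rcases hxg with h' | h'
            · exact hx'A ⟨e, ⟨he, hef⟩, by rw [h']; exact hueE⟩
            · exact hx'y' h'
          · by_cases hgf : g = f
            · subst hgf
              rw [hfq, Sym2.mem_iff] at hxg
              rcases hxg with h' | h'
              · exact hx'v h'
              · exact hwx'.ne' h'
            · exact hx'A ⟨g, ⟨hg.1, hgf⟩, hxg⟩
        exact ⟨_, _, hM1, hM2, fun hEq => hx2 (hEq ▸ hx1), hm1, hm2⟩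
      · push_neg at hxy
        have hyx : y = x := (hxy x ⟨hwx, hxv, hxA⟩ y ⟨huy, hyv, hyB⟩).symm
        have hux : G.Adj u x := hyx ▸ huy
        have hA : ∀ z, G.Adj w z → z ≠ v → z ∉ edgeVerts (M \ {f}) → z = x :=
          fun z h1 h2 h3 => (hxy z ⟨h1, h2, h3⟩ y ⟨huy, hyv, hyB⟩).trans hyx
        exact (uniqueHelper hM he hf hef heq hfq hvw hux hA).elim
    · obtain ⟨x, hwx, hxv, hxA⟩ := freshHelper hM he hf hef heq hfq hvw
      obtain ⟨hM1, hsub, hxin, hxout⟩ := swapHelper hM he hf hef heq hfq hvw hwx hxv hxA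
      refine ih _ hM1 (sharedHelper hterm hxA) ?_
      have h1 : (edgeVerts M).ncard < (edgeVerts (insert s(w, x) (M \ {f}))).ncard :=
        Set.ncard_lt_ncard ⟨hsub, fun hs => hxout (hs hxin)⟩ (Set.toFinite _)
      have h2 : (edgeVerts (insert s(w, x) (M \ {f}))).ncard ≤ Fintype.card V := by
        have h3 := Set.ncard_le_ncard
          (Set.subset_univ (edgeVerts (insert s(w, x) (M \ {f})))) (Set.toFinite _)
        rwa [Set.ncard_univ, Nat.card_eq_fintype_card] at h3
      omega

end EvHelpers

theorem stmt2 [Fintype V] (G : SimpleGraph V) (M : Set (Sym2 V))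
    (hM : IsMinEvDomSet G M)
    (hshare : ∃ e ∈ M, ∃ f ∈ M, e ≠ f ∧ ∃ v : V, v ∈ e ∧ v ∈ f) :
    ∃ M' M'' : Set (Sym2 V), IsMinEvDomSet G M' ∧ IsMinEvDomSet G M'' ∧
      edgeVerts M' ≠ edgeVerts M'' ∧ NoSharedVertex M' ∧ NoSharedVertex M'' :=
  mainHelper G (Fintype.card V + 1) M hM hshare (by omega)
end

section
/- If M is a minimum ev-dominating set (γ_ev-set) of a finite simple graph G, then no three distinct edges of M together form a path on four vertices in G, and no three distinct edges of M together form a cycle on three vertices in G. That is, M contains no three edges of the form ab, bc, cd with a, b, c, d distinct vertices, and no three edges of the form ab, bc, ca with a, b, c distinct vertices. -/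
open SimpleGraph

variable {V : Type*}

theorem stmt3 [Fintype V] (G : SimpleGraph V) (M : Set (Sym2 V))
    (hM : IsMinEvDomSet G M) :
    (¬ ∃ a b c d : V, a ≠ b ∧ a ≠ c ∧ a ≠ d ∧ b ≠ c ∧ b ≠ d ∧ c ≠ d ∧
        s(a, b) ∈ M ∧ s(b, c) ∈ M ∧ s(c, d) ∈ M) ∧
    (¬ ∃ a b c : V, a ≠ b ∧ a ≠ c ∧ b ≠ c ∧
        s(a, b) ∈ M ∧ s(b, c) ∈ M ∧ s(c, a) ∈ M) := by
  obtain ⟨⟨hsub, hdom⟩, hmin⟩ := hM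
  have key : ∀ e ∈ M, ¬ IsEvDomSet G (M \ {e}) := by
    intro e he hds
    have h1 := hmin _ hds
    have hlt : (M \ {e}).ncard < M.ncard := by
      apply Set.ncard_lt_ncard _ (Set.toFinite M)
      refine ⟨Set.diff_subset, fun hsub' => ?_⟩
      have := hsub' he
      simp at this
    omega
  have main : ∀ a b c d : V, a ≠ c → b ≠ d →
      s(a, b) ∈ M → s(b, c) ∈ M → s(c, d) ∈ M → False := by
    intro a b c d hac hbd h1 h2 h3
    apply key s(b,c) h2
    have hne1 : s(a,b) ≠ s(b,c) := by
      intro h; rw [Sym2.eq_iff] at h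
      rcases h with ⟨h', h''⟩ | ⟨h', _⟩
      exacts [hac (h'.trans h''), hac h']
    have hne3 : s(c,d) ≠ s(b,c) := by
      intro h; rw [Sym2.eq_iff] at h
      rcases h with ⟨h', h''⟩ | ⟨_, h'⟩
      exacts [hbd (h''.trans h').symm, hbd h'.symm]
    refine ⟨Set.Subset.trans Set.diff_subset hsub, fun v => ?_⟩
    obtain ⟨e, heM, hev⟩ := hdom v
    by_cases heq : e = s(b,c)
    · subst heq
      rcases hev with hv | ⟨u, hu, hadj⟩
      · rw [Sym2.mem_iff] at hv
        rcases hv with rfl | rfl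
        · exact ⟨s(a,v), ⟨h1, hne1⟩, Or.inl (by simp)⟩
        · exact ⟨s(v,d), ⟨h3, hne3⟩, Or.inl (by simp)⟩
      · rw [Sym2.mem_iff] at hu
        rcases hu with rfl | rfl
        · exact ⟨s(a,u), ⟨h1, hne1⟩, Or.inr ⟨u, by simp, hadj⟩⟩
        · exact ⟨s(u,d), ⟨h3, hne3⟩, Or.inr ⟨u, by simp, hadj⟩⟩
    · exact ⟨e, ⟨heM, heq⟩, hev⟩
  constructor
  · rintro ⟨a, b, c, d, hab, hac, had, hbc, hbd, hcd, h1, h2, h3⟩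
    exact main a b c d hac hbd h1 h2 h3
  · rintro ⟨a, b, c, hab, hac, hbc, h1, h2, h3⟩
    exact main a b c a hac (Ne.symm hab) h1 h2 h3
end

section
/- If a finite simple graph G has a unique minimum ev-dominating set, then G has a unique minimum paired-dominating set. -/
open SimpleGraph

variable {V : Type*}

/-
Let `M` be the unique minimum ev-dominating set. It is a matching: if two of its edges `va`, `vb`
shared the vertex `v`, then `vb` could be replaced by an edge `bw` with `w ≠ v`, or dropped when
`b` is a leaf, without losing ev-domination (everything `vb` ev-dominates near `v` is already
ev-dominated by `va`), contradicting uniqueness or minimality. The endpoints of an ev-dominating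
matching form a paired-dominating set with twice as many vertices as edges, and conversely the
pairing of a paired-dominating set `D` is an ev-dominating matching with `|D| / 2` edges. Hence
the endpoints of `M` form a minimum paired-dominating set, and any other one would come from a
second minimum ev-dominating set.
-/

section

variable {G : SimpleGraph V}

lemma evDom_mk_iff {x y v : V} :
    EvDom G s(x, y) v ↔ v = x ∨ v = y ∨ G.Adj x v ∨ G.Adj y v := by
  simp [EvDom, or_assoc]

lemma IsEvDomSet.of_sdiff_singleton_subset {M N : Set (Sym2 V)} {f : Sym2 V}
    (hM : IsEvDomSet G M) (hN : N ⊆ G.edgeSet) (hMN : M \ {f} ⊆ N)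
    (hf : ∀ v, EvDom G f v → ∃ e ∈ N, EvDom G e v) : IsEvDomSet G N := by
  refine ⟨hN, fun v => ?_⟩
  obtain ⟨e, he, hev⟩ := hM.2 v
  by_cases hef : e = f
  · exact hf v (hef ▸ hev)
  · exact ⟨e, hMN ⟨he, hef⟩, hev⟩

lemma IsMinEvDomSet.of_ncard_le {M N : Set (Sym2 V)} (hM : IsMinEvDomSet G M)
    (hN : IsEvDomSet G N) (hNM : N.ncard ≤ M.ncard) : IsMinEvDomSet G N :=
  ⟨hN, fun _ h => hNM.trans (hM.2 _ h)⟩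

lemma IsMinEvDomSet.not_isEvDomSet_sdiff_singleton {M : Set (Sym2 V)} {f : Sym2 V}
    (hM : IsMinEvDomSet G M) (hfin : M.Finite) (hf : f ∈ M) : ¬ IsEvDomSet G (M \ {f}) :=
  fun h => (hM.2 _ h).not_gt (Set.ncard_sdiff_singleton_lt_of_mem hf hfin)

lemma IsMinEvDomSet.noSharedVertex_of_unique {M : Set (Sym2 V)} (hM : IsMinEvDomSet G M)
    (hfin : M.Finite) (huniq : ∀ N, IsMinEvDomSet G N → N = M) : NoSharedVertex M := by
  intro e he f hf hef v hve hvf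
  obtain ⟨a, rfl⟩ := Sym2.mem_iff_exists.mp hve
  obtain ⟨b, rfl⟩ := Sym2.mem_iff_exists.mp hvf
  have hvb : G.Adj v b := hM.1.1 hf
  have he' : s(v, a) ∈ M \ {s(v, b)} := ⟨he, hef⟩
  by_cases hleaf : ∀ w, G.Adj b w → w = v
  · refine hM.not_isEvDomSet_sdiff_singleton hfin hf <| hM.1.of_sdiff_singleton_subset
      (fun g hg => hM.1.1 hg.1) subset_rfl fun x hx => ⟨s(v, a), he', ?_⟩
    rw [evDom_mk_iff] at hx ⊢
    rcases hx with rfl | rfl | hx | hx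
    · exact Or.inl rfl
    · exact Or.inr (Or.inr (Or.inl hvb))
    · exact Or.inr (Or.inr (Or.inl hx))
    · exact Or.inl (hleaf x hx)
  push Not at hleaf
  obtain ⟨w, hbw, hwv⟩ := hleaf
  set N := insert s(b, w) (M \ {s(v, b)})
  have hN : IsEvDomSet G N := by
    refine hM.1.of_sdiff_singleton_subset (Set.insert_subset hbw fun g hg => hM.1.1 hg.1)
      (Set.subset_insert _ _) fun x hx => ?_
    rw [evDom_mk_iff] at hx
    rcases hx with rfl | rfl | hx | hx
    · exact ⟨s(x, a), Set.mem_insert_of_mem _ he', evDom_mk_iff.2 (Or.inl rfl)⟩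
    · exact ⟨s(x, w), Set.mem_insert _ _, evDom_mk_iff.2 (Or.inl rfl)⟩
    · exact ⟨s(v, a), Set.mem_insert_of_mem _ he', evDom_mk_iff.2 (Or.inr (Or.inr (Or.inl hx)))⟩
    · exact ⟨s(b, w), Set.mem_insert _ _, evDom_mk_iff.2 (Or.inr (Or.inr (Or.inl hx)))⟩
  have hNM : N.ncard ≤ M.ncard :=
    (Set.ncard_insert_le _ _).trans (Set.ncard_sdiff_singleton_add_one hf hfin).le
  have hfN : s(v, b) ∈ N := (huniq N (hM.of_ncard_le hN hNM)).symm ▸ hf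
  rcases hfN with hfN | ⟨-, hfN⟩
  · rcases Sym2.eq_iff.mp hfN with ⟨hvb', -⟩ | ⟨hvw, -⟩
    · exact hvb.ne hvb'
    · exact hwv hvw.symm
  · exact hfN rfl

lemma NoSharedVertex.ncard_edgeVerts {M : Set (Sym2 V)} (hns : NoSharedVertex M)
    (hfin : M.Finite) (hM : M ⊆ G.edgeSet) : (edgeVerts M).ncard = 2 * M.ncard := by
  classical
  have hverts : edgeVerts M = ↑(hfin.toFinset.biUnion Sym2.toFinset) := by
    ext v
    simp [edgeVerts, Sym2.mem_toFinset]
  rw [hverts, Set.ncard_coe_finset, Finset.card_biUnion, Set.ncard_eq_toFinset_card _ hfin,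
    Finset.sum_const_nat (m := 2), mul_comm]
  · intro e he
    exact Sym2.card_toFinset_of_not_isDiag _ (G.not_isDiag_of_mem_edgeSet (hM (by simpa using he)))
  · intro e he f hf hef
    exact Finset.disjoint_left.2 fun v hve hvf =>
      hns e (by simpa using he) f (by simpa using hf) hef v (Sym2.mem_toFinset.1 hve)
        (Sym2.mem_toFinset.1 hvf)

lemma NoSharedVertex.isPMOn_edgeVerts {M : Set (Sym2 V)} (hns : NoSharedVertex M)
    (hM : M ⊆ G.edgeSet) : IsPMOn G (edgeVerts M) M := by
  refine ⟨hM, fun e he v hv => ⟨e, he, hv⟩, fun v ⟨e, he, hve⟩ => ⟨e, ⟨he, hve⟩, ?_⟩⟩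
  rintro f ⟨hf, hvf⟩
  by_contra hfe
  exact hns f hf e he hfe v hvf hve

lemma IsEvDomSet.isDomSet_edgeVerts {M : Set (Sym2 V)} (hM : IsEvDomSet G M) :
    IsDomSet G (edgeVerts M) := by
  intro v hv
  obtain ⟨e, he, hve | ⟨u, hue, huv⟩⟩ := hM.2 v
  · exact absurd ⟨e, he, hve⟩ hv
  · exact ⟨u, ⟨e, he, hue⟩, huv⟩

lemma IsPMOn.noSharedVertex {D : Set V} {M : Set (Sym2 V)} (h : IsPMOn G D M) :
    NoSharedVertex M := by
  intro e he f hf hef v hve hvf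
  obtain ⟨g, -, hg⟩ := h.2.2 v (h.2.1 e he v hve)
  exact hef ((hg e ⟨he, hve⟩).trans (hg f ⟨hf, hvf⟩).symm)

lemma IsPMOn.edgeVerts_eq {D : Set V} {M : Set (Sym2 V)} (h : IsPMOn G D M) :
    edgeVerts M = D := by
  ext v
  refine ⟨fun ⟨e, he, hv⟩ => h.2.1 e he v hv, fun hv => ?_⟩
  obtain ⟨e, ⟨he, hve⟩, -⟩ := h.2.2 v hv
  exact ⟨e, he, hve⟩

lemma IsPMOn.isEvDomSet {D : Set V} {M : Set (Sym2 V)} (hD : IsDomSet G D)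
    (h : IsPMOn G D M) : IsEvDomSet G M := by
  refine ⟨h.1, fun v => ?_⟩
  by_cases hv : v ∈ D
  · obtain ⟨e, ⟨he, hve⟩, -⟩ := h.2.2 v hv
    exact ⟨e, he, Or.inl hve⟩
  · obtain ⟨u, hu, huv⟩ := hD v hv
    obtain ⟨e, ⟨he, hue⟩, -⟩ := h.2.2 u hu
    exact ⟨e, he, Or.inr ⟨u, hue, huv⟩⟩

lemma IsPairedDomSet.exists_isEvDomSet [Finite V] {D : Set V} (hD : IsPairedDomSet G D) :
    ∃ M, IsEvDomSet G M ∧ edgeVerts M = D ∧ D.ncard = 2 * M.ncard := by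
  obtain ⟨hdom, M, hM⟩ := hD
  refine ⟨M, hM.isEvDomSet hdom, hM.edgeVerts_eq, ?_⟩
  rw [← hM.edgeVerts_eq]
  exact hM.noSharedVertex.ncard_edgeVerts M.toFinite hM.1

end

theorem stmt4 [Fintype V] (G : SimpleGraph V)
    (h : ∃! M : Set (Sym2 V), IsMinEvDomSet G M) :
    ∃! D : Set V, IsMinPairedDomSet G D := by
  obtain ⟨M, hM, huniq⟩ := h
  have hns : NoSharedVertex M := hM.noSharedVertex_of_unique M.toFinite huniq
  have hpd : IsPairedDomSet G (edgeVerts M) :=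
    ⟨hM.1.isDomSet_edgeVerts, M, hns.isPMOn_edgeVerts hM.1.1⟩
  have hcard : (edgeVerts M).ncard = 2 * M.ncard := hns.ncard_edgeVerts M.toFinite hM.1.1
  refine ⟨edgeVerts M, ⟨hpd, fun D hD => ?_⟩, fun D hD => ?_⟩
  · obtain ⟨M', hM', -, hD'⟩ := hD.exists_isEvDomSet
    have := hM.2 M' hM'
    omega
  · obtain ⟨M', hM', rfl, hD'⟩ := hD.1.exists_isEvDomSet
    have hle := hD.2 _ hpd
    rw [huniq M' (hM.of_ncard_le hM' (by omega))]
end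

section
/- Let G be a finite simple graph and let M′, M″ ⊆ E be two distinct sets of edges, each consisting of pairwise vertex-disjoint edges, such that V_G(M′) = V_G(M″). Then G contains a cycle; in particular, if G is a forest (acyclic), then M′ = M″. -/
open SimpleGraph

variable {V : Type*}

theorem stmt11 [Fintype V] (G : SimpleGraph V) (M' M'' : Set (Sym2 V))
    (hM' : M' ⊆ G.edgeSet) (hM'' : M'' ⊆ G.edgeSet)
    (hd' : NoSharedVertex M') (hd'' : NoSharedVertex M'')
    (hne : M' ≠ M'') (hV : edgeVerts M' = edgeVerts M'') :
    ¬ G.IsAcyclic := by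
  intro hac
  classical
  set D : Set (Sym2 V) := (M' \ M'') ∪ (M'' \ M') with hDdef
  have hDG : D ⊆ G.edgeSet := by
    rintro e (he | he)
    · exact hM' he.1
    · exact hM'' he.1
  set H : SimpleGraph V := SimpleGraph.fromEdgeSet D with hHdef
  have hHG : H ≤ G := by
    rw [hHdef, ← G.fromEdgeSet_edgeSet]
    exact SimpleGraph.fromEdgeSet_mono hDG
  -- a one-sided helper
  have half : ∀ (A B : Set (Sym2 V)), NoSharedVertex A →
      edgeVerts A ⊆ edgeVerts B → ∀ e ∈ A \ B, ∀ v ∈ e, ∃ f ∈ B \ A, v ∈ f ∧ f ≠ e := by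
    intro A B hdA hAB e he v hv
    obtain ⟨f, hfB, hvf⟩ := hAB ⟨e, he.1, hv⟩
    have hfe : f ≠ e := fun h => he.2 (h ▸ hfB)
    have hfA : f ∉ A := by
      intro hfA
      exact hdA e he.1 f hfA hfe.symm v hv hvf
    exact ⟨f, ⟨hfB, hfA⟩, hvf, hfe⟩
  -- every vertex on a D-edge has a second edge in D
  have key : ∀ e ∈ D, ∀ v ∈ e, ∃ f ∈ D, v ∈ f ∧ f ≠ e := by
    rintro e (he | he) v hv
    · obtain ⟨f, hf, hvf, hfe⟩ := half M' M'' hd' (hV ▸ fun x hx => hx) e he v hv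
      exact ⟨f, Or.inr hf, hvf, hfe⟩
    · obtain ⟨f, hf, hvf, hfe⟩ := half M'' M' hd'' (hV ▸ fun x hx => hx) e he v hv
      exact ⟨f, Or.inl hf, hvf, hfe⟩
  -- degree ≥ 2 version in H
  have deg2 : ∀ v x : V, H.Adj v x → ∃ w, w ≠ x ∧ H.Adj v w := by
    intro v x hvx
    rw [hHdef, SimpleGraph.fromEdgeSet_adj] at hvx
    obtain ⟨f, hfD, hvf, hfe⟩ := key _ hvx.1 v (Sym2.mem_mk_left v x)
    obtain ⟨b, hb⟩ : ∃ b, f = s(v, b) := ⟨Sym2.Mem.other hvf, (Sym2.other_spec hvf).symm⟩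
    refine ⟨b, ?_, ?_⟩
    · rintro rfl
      exact hfe hb
    · rw [hHdef, SimpleGraph.fromEdgeSet_adj]
      refine ⟨hb ▸ hfD, ?_⟩
      rintro rfl
      exact (G.not_isDiag_of_mem_edgeSet (hDG hfD)) (hb ▸ Sym2.mk_isDiag_iff.2 rfl)
  -- D is nonempty
  obtain ⟨e0, he0⟩ : D.Nonempty := by
    rw [Set.nonempty_iff_ne_empty]
    intro hDe
    have h : ∀ e, e ∉ D := fun e he => by simp [hDe] at he
    apply hne
    ext e
    constructor
    · intro he
      by_contra he'
      exact h e (Or.inl ⟨he, he'⟩)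
    · intro he
      by_contra he'
      exact h e (Or.inr ⟨he, he'⟩)
  -- a path of length 1 in H
  obtain ⟨x0, y0, hxy0⟩ : ∃ x y, e0 = s(x, y) := by
    induction e0 using Sym2.ind with | _ x y => exact ⟨x, y, rfl⟩
  have hadj0 : H.Adj x0 y0 := by
    rw [hHdef, SimpleGraph.fromEdgeSet_adj]
    refine ⟨hxy0 ▸ he0, ?_⟩
    rintro rfl
    exact (G.not_isDiag_of_mem_edgeSet (hDG he0)) (hxy0 ▸ Sym2.mk_isDiag_iff.2 rfl)
  -- the set of path lengths
  set S : Set ℕ := {n | ∃ (u v : V) (p : H.Walk u v), p.IsPath ∧ p.length = n} with hSdef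
  have h1S : 1 ∈ S := by
    refine ⟨x0, y0, SimpleGraph.Walk.cons hadj0 SimpleGraph.Walk.nil, ?_, rfl⟩
    simp [SimpleGraph.Walk.cons_isPath_iff, hadj0.ne]
  have hSbdd : BddAbove S := by
    refine ⟨Fintype.card V, ?_⟩
    rintro n ⟨u, v, p, hp, rfl⟩
    exact hp.length_lt.le
  obtain ⟨v, u, p, hp, hplen⟩ := Nat.sSup_mem ⟨1, h1S⟩ hSbdd
  have hmax : ∀ m ∈ S, m ≤ sSup S := fun m hm => le_csSup hSbdd hm
  have h1le : 1 ≤ sSup S := hmax 1 h1S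
  -- p is nonnil, decompose
  cases p with
  | nil => simp at hplen; omega
  | @cons _ x _ h p' =>
    rw [SimpleGraph.Walk.length_cons] at hplen
    have hvx : H.Adj v x := h
    obtain ⟨w, hwx, hvw⟩ := deg2 v x hvx
    have hvnp' : v ∉ p'.support := (SimpleGraph.Walk.cons_isPath_iff h p').1 hp |>.2
    have hp' : p'.IsPath := (SimpleGraph.Walk.cons_isPath_iff h p').1 hp |>.1
    by_cases hwmem : w ∈ (SimpleGraph.Walk.cons h p').support
    · -- close a cycle
      set q := (SimpleGraph.Walk.cons h p').takeUntil w hwmem with hq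
      have hqpath : q.IsPath := hp.takeUntil hwmem
      have hqe : s(w, v) ∉ q.edges := by
        intro hmem
        have := SimpleGraph.Walk.edges_takeUntil_subset (SimpleGraph.Walk.cons h p') hwmem hmem
        rw [SimpleGraph.Walk.edges_cons] at this
        rcases List.mem_cons.1 this with h1 | h2
        · rw [Sym2.eq_iff] at h1
          rcases h1 with ⟨h1a, h1b⟩ | ⟨h1a, h1b⟩
          · exact hvw.ne h1a.symm
          · exact hwx h1a
        · exact hvnp' (SimpleGraph.Walk.snd_mem_support_of_mem_edges p' h2)
      have hcyc : (SimpleGraph.Walk.cons hvw.symm q).IsCycle :=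
        (SimpleGraph.Walk.cons_isCycle_iff q hvw.symm).2 ⟨hqpath, hqe⟩
      exact hac ((SimpleGraph.Walk.cons hvw.symm q).mapLe hHG) (hcyc.mapLe hHG)
    · -- extend the path: contradiction with maximality
      have hext : ((SimpleGraph.Walk.cons h p').length + 1) ∈ S := by
        refine ⟨w, u, SimpleGraph.Walk.cons hvw.symm (SimpleGraph.Walk.cons h p'), ?_, by simp⟩
        exact (SimpleGraph.Walk.cons_isPath_iff hvw.symm _).2 ⟨hp, hwmem⟩
      have := hmax _ hext
      rw [SimpleGraph.Walk.length_cons] at this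
      omega
end
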